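/- Let V be a K-subspace of R = K[X_1,...,X_n] and τ a monomial order. The residue classes of the monomials not lying in M(V) = {in_τ(f) : f ∈ V, f ≠ 0} form a K-basis of the quotient space R/V. -/

import Mathlib

open MvPolynomial

/-- The exponent of the initial monomial of `f` with respect to the monomial order `m`. -/
noncomputable def MonomialOrder.inExp {σ K : Type*} [CommSemiring K] (m : MonomialOrder σ)
    (f : MvPolynomial σ K) : σ →₀ ℕ :=
  m.toSyn.symm (f.support.sup m.toSyn)

/-- The set of exponents of initial monomials of nonzero elements of `V`. -/
def iniExps {K : Type*} [Field K] {n : ℕ} (m : MonomialOrder (Fin n))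
    (V : Submodule K (MvPolynomial (Fin n) K)) : Set (Fin n →₀ ℕ) :=
  {e | ∃ f ∈ V, f ≠ 0 ∧ m.inExp f = e}

section Helpers

variable {σ K : Type*} [CommSemiring K] (m : MonomialOrder σ)

lemma MonomialOrder.toSyn_inExp (f : MvPolynomial σ K) :
    m.toSyn (m.inExp f) = f.support.sup m.toSyn := by
  simp [MonomialOrder.inExp]

lemma MonomialOrder.inExp_mem_support {f : MvPolynomial σ K} (hf : f ≠ 0) :
    m.inExp f ∈ f.support := by
  have hne : f.support.Nonempty := MvPolynomial.support_nonempty.mpr hf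
  obtain ⟨b, hb, h⟩ := Finset.exists_mem_eq_sup f.support hne m.toSyn
  rw [MonomialOrder.inExp, h, AddEquiv.symm_apply_apply]
  exact hb

lemma MonomialOrder.coeff_inExp_ne_zero {f : MvPolynomial σ K} (hf : f ≠ 0) :
    f.coeff (m.inExp f) ≠ 0 :=
  MvPolynomial.mem_support_iff.mp (m.inExp_mem_support hf)

lemma MonomialOrder.le_inExp {f : MvPolynomial σ K} {d : σ →₀ ℕ} (hd : d ∈ f.support) :
    m.toSyn d ≤ m.toSyn (m.inExp f) := by
  rw [m.toSyn_inExp]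
  exact Finset.le_sup hd

lemma MonomialOrder.coeff_eq_zero_of_lt_inExp {f : MvPolynomial σ K} {d : σ →₀ ℕ}
    (hd : m.toSyn (m.inExp f) < m.toSyn d) : f.coeff d = 0 := by
  by_contra h
  exact absurd (m.le_inExp (MvPolynomial.mem_support_iff.mpr h)) (not_le.mpr hd)

lemma MonomialOrder.inExp_lt {f : MvPolynomial σ K} {e : σ →₀ ℕ} (hf : f ≠ 0)
    (h : ∀ d, m.toSyn e ≤ m.toSyn d → f.coeff d = 0) :
    m.toSyn (m.inExp f) < m.toSyn e := by
  by_contra hc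
  exact m.coeff_inExp_ne_zero hf (h _ (not_lt.mp hc))

end Helpers

/-- The residue classes of the monomials not lying in `M(V)` form a `K`-basis of the
quotient space `R/V`. -/
theorem monomials_not_initial_basis_of_quotient {K : Type*} [Field K] {n : ℕ}
    (m : MonomialOrder (Fin n)) (V : Submodule K (MvPolynomial (Fin n) K)) :
    ∃ B : Module.Basis {e : Fin n →₀ ℕ // e ∉ iniExps m V} K (MvPolynomial (Fin n) K ⧸ V),
      ∀ e, B e = Submodule.Quotient.mk (monomial e.1 (1 : K)) := by
  classical
  set S := {e : Fin n →₀ ℕ // e ∉ iniExps m V}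
  set v : S → MvPolynomial (Fin n) K ⧸ V :=
    fun e => Submodule.Quotient.mk (monomial e.1 (1 : K)) with hv
  -- linear independence
  have hli : LinearIndependent K v := by
    rw [linearIndependent_iff]
    intro l hl
    set f : MvPolynomial (Fin n) K :=
      Finsupp.linearCombination K (fun e : S => monomial e.1 (1 : K)) l with hf
    have hcoeff : ∀ e : S, f.coeff e.1 = l e := by
      intro e
      rw [hf, Finsupp.linearCombination_apply, Finsupp.sum, coeff_sum]
      simp only [coeff_smul, coeff_monomial, smul_eq_mul]
      simp only [mul_ite, mul_one, mul_zero, Subtype.coe_inj]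
      rw [Finset.sum_ite_eq' l.support e (fun x => l x)]
      by_cases h : e ∈ l.support
      · rw [if_pos h]
      · rw [if_neg h, eq_comm]
        exact Finsupp.notMem_support_iff.mp h
    have hfV : f ∈ V := by
      have : Submodule.Quotient.mk f = (0 : MvPolynomial (Fin n) K ⧸ V) := by
        rw [← hl, hf, Finsupp.linearCombination_apply, Finsupp.linearCombination_apply,
          Finsupp.sum, Finsupp.sum,
          show (Submodule.Quotient.mk : MvPolynomial (Fin n) K → MvPolynomial (Fin n) K ⧸ V)
            = V.mkQ from rfl, map_sum]
        simp [hv, Submodule.mkQ_apply]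
      rwa [Submodule.Quotient.mk_eq_zero] at this
    have hf0 : f = 0 := by
      by_contra h0
      have hmem : m.inExp f ∈ iniExps m V := ⟨f, hfV, h0, rfl⟩
      -- every exponent in support of f avoids iniExps
      have hsupp : ∀ d ∈ f.support, d ∉ iniExps m V := by
        intro d hd
        rw [hf, Finsupp.linearCombination_apply, Finsupp.sum] at hd
        have := MvPolynomial.support_sum hd
        simp only [Finset.mem_biUnion] at this
        obtain ⟨e, _, hde⟩ := this
        have : d ∈ (monomial e.1 (1 : K)).support := by
          have h1 : (l e • monomial e.1 (1:K)).support ⊆ (monomial e.1 (1:K)).support :=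
            MvPolynomial.support_smul
          exact h1 hde
        rw [MvPolynomial.support_monomial] at this
        simp only [if_neg (one_ne_zero : (1:K) ≠ 0), Finset.mem_singleton] at this
        rw [this]
        exact e.2
      exact hsupp _ (m.inExp_mem_support h0) hmem
    ext e
    rw [← hcoeff e, hf0]
    simp
  -- spanning
  have hspan : ⊤ ≤ Submodule.span K (Set.range v) := by
    have key : ∀ (d : m.syn) (f : MvPolynomial (Fin n) K), m.toSyn (m.inExp f) = d →
        Submodule.Quotient.mk f ∈ Submodule.span K (Set.range v) := by
      intro d
      induction d using WellFoundedLT.induction with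
      | _ d ih =>
      intro f hfd
      by_cases hf0 : f = 0
      · rw [hf0]
        exact (Submodule.span K (Set.range v)).zero_mem
      set e := m.inExp f with he
      set c := f.coeff e with hc
      have hc0 : c ≠ 0 := m.coeff_inExp_ne_zero hf0
      by_cases hmem : e ∈ iniExps m V
      · obtain ⟨h, hhV, hh0, hhe⟩ := hmem
        set c' := h.coeff e with hc'
        have hc'0 : c' ≠ 0 := by
          rw [hc', ← hhe]
          exact m.coeff_inExp_ne_zero hh0
        set g := f - (c * c'⁻¹) • h with hg
        have hmk : Submodule.Quotient.mk f = (Submodule.Quotient.mk g :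
            MvPolynomial (Fin n) K ⧸ V) := by
          rw [Submodule.Quotient.eq]
          have : f - g = (c * c'⁻¹) • h := by rw [hg]; ring
          rw [this]
          exact V.smul_mem _ hhV
        rw [hmk]
        by_cases hg0 : g = 0
        · rw [hg0]
          exact (Submodule.span K (Set.range v)).zero_mem
        refine ih _ ?_ g rfl
        rw [← hfd]
        apply m.inExp_lt hg0
        intro d' hd'
        rw [hg]
        simp only [MvPolynomial.coeff_sub, MvPolynomial.coeff_smul, smul_eq_mul]
        rcases eq_or_ne d' e with rfl | hne
        · rw [← hc, ← hc']
          field_simp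
          ring
        · have hlt : m.toSyn e < m.toSyn d' :=
            lt_of_le_of_ne hd' (fun hh => hne (m.toSyn.injective hh).symm)
          rw [m.coeff_eq_zero_of_lt_inExp (show m.toSyn (m.inExp f) < m.toSyn d' from hlt),
            m.coeff_eq_zero_of_lt_inExp (by rw [hhe]; exact hlt)]
          ring
      · set g := f - monomial e c with hg
        have hmk : Submodule.Quotient.mk f = (Submodule.Quotient.mk g :
            MvPolynomial (Fin n) K ⧸ V) + c • v ⟨e, hmem⟩ := by
          rw [hv]
          simp only
          rw [← Submodule.Quotient.mk_smul, ← Submodule.Quotient.mk_add]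
          congr 1
          rw [hg, smul_monomial, smul_eq_mul, mul_one]
          ring
        rw [hmk]
        refine Submodule.add_mem _ ?_ (Submodule.smul_mem _ _
          (Submodule.subset_span ⟨⟨e, hmem⟩, rfl⟩))
        by_cases hg0 : g = 0
        · rw [hg0]
          exact (Submodule.span K (Set.range v)).zero_mem
        refine ih _ ?_ g rfl
        rw [← hfd]
        apply m.inExp_lt hg0
        intro d' hd'
        rw [hg]
        simp only [MvPolynomial.coeff_sub, MvPolynomial.coeff_monomial]
        rcases eq_or_ne d' e with rfl | hne
        · simp [← hc]
        · have hlt : m.toSyn e < m.toSyn d' :=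
            lt_of_le_of_ne hd' (fun hh => hne (m.toSyn.injective hh).symm)
          rw [m.coeff_eq_zero_of_lt_inExp (show m.toSyn (m.inExp f) < m.toSyn d' from hlt),
            if_neg (Ne.symm hne)]
          ring
    intro x _
    obtain ⟨f, rfl⟩ := Submodule.Quotient.mk_surjective V x
    exact key _ f rfl
  exact ⟨Module.Basis.mk hli hspan, fun e => Module.Basis.mk_apply hli hspan e⟩
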